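/- arXiv:1911.09566 — 2 statements merged into one kernel-verified Lean document; each statement's English description precedes it below -/
import Mathlib

section
/- Let P = {(x,y) ∈ ℝ² : |x| ≤ 1, |y| ≤ 1} and, for t ∈ (−1,1), let L_t = {(t,y) : y ∈ ℝ} divide P into P₊ = {(x,y) ∈ P : x ≥ t} and P₋ = {(x,y) ∈ P : x ≤ t}. Then c(P₊) = 1 − t, c(P₋) = 1 + t, and hence c(P₊) + c(P₋) = c(P), where for a compact convex set C ⊂ ℝ² with C ∩ ℝ^{1,0} ≠ ∅, c(C) denotes the minimal positive action A(x) over all generalized leafwise chords x on ∂C for ℝ^{1,0}. -/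
/-!
Write `ż = J n` with `n` in the normal cone at `z`. Then `⟨-J ż, z⟩ = ⟨n, z⟩` is the support
function of the rectangle `[a, b] × [-1, 1]` at `n`, so along a chord `z = (x, y)`
`2 A(z) = (a + b)/2 ∫ ẏ + (b - a)/2 ∫ |ẏ| + ∫ |ẋ|`, and `∫ ẏ = 0` since `y(0) = y(T) = 0`.
A nonconstant chord leaves the horizontal axis, say downwards; it can only descend on the left
side and climb on the right side, and to get from one to the other it moves right along the
bottom. Hence `∫ |ẏ| ≥ 2` and `∫ |ẋ| ≥ b - a`, i.e. `A(z) ≥ b - a`, with equality for the chord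
running up the right side, along the top and down the left side. The three sets of the theorem
are such rectangles, of widths `1 - t`, `1 + t` and `2`.
-/

open MeasureTheory Set

noncomputable section

/-- ℝ^{2n} modeled as functions `Fin (2*n) → ℝ`. -/
abbrev E2 (n : ℕ) : Type := Fin (2 * n) → ℝ

/-- The standard inner product on `ℝ^{2n}`. -/
def ip {n : ℕ} (x y : E2 n) : ℝ := ∑ i, x i * y i

/-- The standard complex structure `J = [[0, -Iₙ],[Iₙ, 0]]`. -/
def Jmap {n : ℕ} (x : E2 n) : E2 n := fun i =>
  if h : (i : ℕ) < n then -x ⟨(i : ℕ) + n, by omega⟩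
  else x ⟨(i : ℕ) - n, by have := i.isLt; omega⟩

/-- The standard symplectic form `ω₀(u,v) = ⟨Ju, v⟩`. -/
def omega0 {n : ℕ} (u v : E2 n) : ℝ := ip (Jmap u) v

/-- The action `A(z) = ½ ∫₀ᵀ ⟨-Jż(t), z(t)⟩ dt` of a path `z : [0,T] → ℝ^{2n}`
with a.e. derivative `dz`. -/
def pathAction {n : ℕ} (T : ℝ) (z dz : ℝ → E2 n) : ℝ :=
  (1 / 2) * ∫ t in (0:ℝ)..T, ip (-(Jmap (dz t))) (z t)

/-- The coisotropic subspace `ℝ^{n,k} = {(q₁,…,qₙ,p₁,…,p_k,0,…,0)}`. -/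
def Rnk (n k : ℕ) : Set (E2 n) := {x | ∀ i : Fin (2 * n), n + k ≤ (i : ℕ) → x i = 0}

/-- The leaf direction space `V₀^{n,k} = {(0,…,0,q_{k+1},…,qₙ,0,…,0)}`. -/
def V0nk (n k : ℕ) : Set (E2 n) :=
  {x | ∀ i : Fin (2 * n), ((i : ℕ) < k ∨ n ≤ (i : ℕ)) → x i = 0}

/-- A generalized leafwise chord on `∂K` for `ℝ^{n,k}`, given together with its a.e.
derivative `dz`; the condition `z t = z 0 + ∫₀ᵗ dz` encodes that `z` is absolutely
continuous with derivative `dz` a.e., and `dz t ∈ J N_{∂K}(z t)` holds a.e. -/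
def IsGLC (n k : ℕ) (K : Set (E2 n)) (T : ℝ) (z dz : ℝ → E2 n) : Prop :=
  0 < T ∧
  IntervalIntegrable dz volume 0 T ∧
  (∀ t ∈ Set.Icc (0:ℝ) T, z t = z 0 + ∫ s in (0:ℝ)..t, dz s) ∧
  (∀ t ∈ Set.Icc (0:ℝ) T, z t ∈ frontier K) ∧
  z 0 ∈ Rnk n k ∧ z T ∈ Rnk n k ∧ z 0 - z T ∈ V0nk n k ∧
  (∀ᵐ t ∂(volume : Measure ℝ), t ∈ Set.Ioo (0:ℝ) T →
    ∃ y : E2 n, (∀ u ∈ K, ip (u - z t) y ≤ 0) ∧ dz t = Jmap y) ∧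
  (∃ t ∈ Set.Icc (0:ℝ) T, z t ≠ z 0)

/-- The set of positive actions of generalized leafwise chords on `∂K` for `ℝ^{n,k}`. -/
def glcActions (n k : ℕ) (K : Set (E2 n)) : Set ℝ :=
  {a | 0 < a ∧ ∃ T z dz, IsGLC n k K T z dz ∧ pathAction T z dz = a}

open intervalIntegral

section Coordinates

def vec2 (x y : ℝ) : E2 1 := ![x, y]

@[simp] lemma vec2_apply_zero (x y : ℝ) : vec2 x y 0 = x := rfl

@[simp] lemma vec2_apply_one (x y : ℝ) : vec2 x y 1 = y := rfl

lemma vec2_add_vec2 (x y u v : ℝ) : vec2 x y + vec2 u v = vec2 (x + u) (y + v) := by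
  ext i; fin_cases i <;> rfl

lemma smul_vec2 (c x y : ℝ) : c • vec2 x y = vec2 (c * x) (c * y) := by
  ext i; fin_cases i <;> rfl

lemma ip_eq (p q : E2 1) : ip p q = p 0 * q 0 + p 1 * q 1 := by
  simp [ip, Fin.sum_univ_two]

lemma Jmap_apply_zero (p : E2 1) : Jmap p 0 = -p 1 := rfl

lemma Jmap_apply_one (p : E2 1) : Jmap p 1 = p 0 := rfl

lemma Jmap_vec2 (x y : ℝ) : Jmap (vec2 x y) = vec2 (-y) x := by
  ext i; fin_cases i <;> rfl

lemma neg_Jmap_Jmap (p : E2 1) : -Jmap (Jmap p) = p := by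
  ext i; fin_cases i <;> simp [Jmap_apply_zero, Jmap_apply_one]

lemma ip_neg_Jmap (v p : E2 1) : ip (-Jmap v) p = v 1 * p 0 - v 0 * p 1 := by
  rw [ip_eq, Pi.neg_apply, Pi.neg_apply, Jmap_apply_zero, Jmap_apply_one]
  ring

lemma mem_Rnk_one_zero {p : E2 1} : p ∈ Rnk 1 0 ↔ p 1 = 0 := by
  simp [Rnk, Fin.forall_fin_two]

lemma mem_V0nk_one_zero {p : E2 1} : p ∈ V0nk 1 0 ↔ p 1 = 0 := by
  simp [V0nk, Fin.forall_fin_two]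

end Coordinates

section Rectangle

def rect (a b : ℝ) : Set (E2 1) := {p | p 0 ∈ Icc a b ∧ p 1 ∈ Icc (-1) 1}

lemma vec2_mem_rect {a b x y : ℝ} : vec2 x y ∈ rect a b ↔ x ∈ Icc a b ∧ y ∈ Icc (-1) 1 :=
  Iff.rfl

lemma isClosed_rect (a b : ℝ) : IsClosed (rect a b) :=
  (isClosed_Icc.preimage (continuous_apply 0)).inter (isClosed_Icc.preimage (continuous_apply 1))

lemma interior_rect (a b : ℝ) :
    interior (rect a b) = {p | p 0 ∈ Ioo a b ∧ p 1 ∈ Ioo (-1) 1} := by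
  have h (i : Fin (2 * 1)) (s : Set ℝ) :
      interior ((Function.eval i : E2 1 → ℝ) ⁻¹' s) = Function.eval i ⁻¹' interior s :=
    ((isOpenMap_eval (X := fun _ => ℝ) i).preimage_interior_eq_interior_preimage
      (continuous_apply i) s).symm
  change interior ((Function.eval 0 : E2 1 → ℝ) ⁻¹' Icc a b ∩
    (Function.eval 1 : E2 1 → ℝ) ⁻¹' Icc (-1) 1) = _
  rw [interior_inter, h, h, interior_Icc, interior_Icc]
  rfl

lemma mem_frontier_rect {a b : ℝ} {p : E2 1} (hp : p ∈ rect a b)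
    (h : p 0 = a ∨ p 0 = b ∨ p 1 = -1 ∨ p 1 = 1) : p ∈ frontier (rect a b) := by
  rw [(isClosed_rect a b).frontier_eq, interior_rect]
  refine ⟨hp, fun ⟨⟨ha, hb⟩, hl, hu⟩ => ?_⟩
  rcases h with h | h | h | h <;> linarith

end Rectangle

section Primitive

lemma ae_uIoc_of_ae_Ioo {P : ℝ → Prop} {u v t : ℝ} (h : ∀ᵐ s, s ∈ Ioo u v → P s)
    (ht : t ∈ Icc u v) : ∀ᵐ s, s ∈ uIoc u t → P s := by
  filter_upwards [h, volume.ae_ne v] with s hs hsv hst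
  rw [uIoc_of_le ht.1] at hst
  exact hs ⟨hst.1, lt_of_le_of_ne (hst.2.trans ht.2) hsv⟩

def IsPrimitiveOn (f f' : ℝ → ℝ) (T : ℝ) : Prop :=
  IntervalIntegrable f' volume 0 T ∧ ∀ t ∈ Icc 0 T, f t = f 0 + ∫ s in 0..t, f' s

variable {f f' : ℝ → ℝ} {T u v : ℝ}

lemma IsPrimitiveOn.intervalIntegrable (hf : IsPrimitiveOn f f' T) (hu : u ∈ Icc 0 T)
    (hv : v ∈ Icc 0 T) : IntervalIntegrable f' volume u v :=
  hf.1.mono_set (uIcc_subset_uIcc (Icc_subset_uIcc hu) (Icc_subset_uIcc hv))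

lemma IsPrimitiveOn.integral_eq_sub (hf : IsPrimitiveOn f f' T) (hu : u ∈ Icc 0 T)
    (hv : v ∈ Icc 0 T) : ∫ s in u..v, f' s = f v - f u := by
  have h0 : (0 : ℝ) ∈ Icc 0 T := ⟨le_rfl, hu.1.trans hu.2⟩
  rw [hf.2 v hv, hf.2 u hu, ← integral_interval_sub_left (hf.intervalIntegrable h0 hv)
    (hf.intervalIntegrable h0 hu)]
  ring

lemma IsPrimitiveOn.neg (hf : IsPrimitiveOn f f' T) :
    IsPrimitiveOn (fun s => -f s) (fun s => -f' s) T :=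
  ⟨hf.1.neg, fun t ht => by simp only [intervalIntegral.integral_neg, hf.2 t ht]; ring⟩

lemma IsPrimitiveOn.abs_sub_le_integral_abs (hf : IsPrimitiveOn f f' T) (hu : u ∈ Icc 0 T)
    (hv : v ∈ Icc 0 T) (huv : u ≤ v) : |f v - f u| ≤ ∫ s in u..v, |f' s| := by
  rw [← hf.integral_eq_sub hu hv]
  exact abs_integral_le_integral_abs huv

lemma IsPrimitiveOn.integral_abs_eq_add (hf : IsPrimitiveOn f f' T) (hu : u ∈ Icc 0 T) :
    ∫ s in 0..T, |f' s| = (∫ s in 0..u, |f' s|) + ∫ s in u..T, |f' s| := by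
  have h0 : (0 : ℝ) ∈ Icc 0 T := ⟨le_rfl, hu.1.trans hu.2⟩
  have hT : T ∈ Icc 0 T := ⟨hu.1.trans hu.2, le_rfl⟩
  exact (integral_add_adjacent_intervals (hf.intervalIntegrable h0 hu).abs
    (hf.intervalIntegrable hu hT).abs).symm

lemma IsPrimitiveOn.eq_of_ae_deriv_eq_zero (hf : IsPrimitiveOn f f' T)
    (h : ∀ᵐ s, s ∈ Ioo 0 T → f' s = 0) {t : ℝ} (ht : t ∈ Icc 0 T) : f t = f 0 := by
  rw [hf.2 t ht, integral_congr_ae (ae_uIoc_of_ae_Ioo h ht), intervalIntegral.integral_zero,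
    add_zero]

lemma IsPrimitiveOn.exists_deriv_pos {P : ℝ → Prop} (hf : IsPrimitiveOn f f' T)
    (hP : ∀ᵐ s, s ∈ Ioo 0 T → P s) (hu : u ∈ Icc 0 T) (hv : v ∈ Icc 0 T) (huv : u ≤ v)
    (hlt : f u < f v) : ∃ s ∈ Ioo u v, 0 < f' s ∧ P s := by
  by_contra! hneg
  have hle : ∀ᵐ s, s ∈ Ioo u v → f' s ≤ 0 := by
    filter_upwards [hP] with s hs hsuv
    by_contra! hpos
    exact hneg s hsuv hpos (hs ⟨hu.1.trans_lt hsuv.1, hsuv.2.trans_le hv.2⟩)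
  have hint : ∫ s in u..v, f' s ≤ 0 := by
    rw [integral_of_le huv, integral_Ioc_eq_integral_Ioo]
    exact setIntegral_nonpos_ae measurableSet_Ioo hle
  rw [hf.integral_eq_sub hu hv] at hint
  linarith

end Primitive

section RectVelocity

/-- The sign constraints that `ż ∈ J N(z)` imposes on a velocity `(x', y')` at a point `(x, y)`
of the boundary of `[a, b] × [-1, 1]`: the boundary is run through counterclockwise. -/
def RectVelocity (a b x y x' y' : ℝ) : Prop :=
  (0 < y' → x = b) ∧ (y' < 0 → x = a) ∧ (0 < x' → y = -1) ∧ (x' < 0 → y = 1)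

variable {a b x y x' y' : ℝ}

lemma RectVelocity.neg (h : RectVelocity a b x y x' y') :
    RectVelocity (-b) (-a) (-x) (-y) (-x') (-y') := by
  obtain ⟨h₁, h₂, h₃, h₄⟩ := h
  refine ⟨fun h' => ?_, fun h' => ?_, fun h' => ?_, fun h' => ?_⟩
  · rw [h₂ (by linarith)]
  · rw [h₁ (by linarith)]
  · rw [h₄ (by linarith)]
  · rw [h₃ (by linarith), neg_neg]

/-- `⟨-J ż, z⟩` is the support function of the rectangle at the normal vector `-J ż`. -/
lemma RectVelocity.mul_sub_mul_eq (h : RectVelocity a b x y x' y') :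
    y' * x - x' * y = (a + b) / 2 * y' + (b - a) / 2 * |y'| + |x'| := by
  obtain ⟨h₁, h₂, h₃, h₄⟩ := h
  have hx : y' * x = (a + b) / 2 * y' + (b - a) / 2 * |y'| := by
    rcases lt_trichotomy y' 0 with h | h | h
    · rw [h₂ h, abs_of_neg h]; ring
    · simp [h]
    · rw [h₁ h, abs_of_pos h]; ring
  have hy : -(x' * y) = |x'| := by
    rcases lt_trichotomy x' 0 with h | h | h
    · rw [h₄ h, abs_of_neg h]; ring
    · simp [h]
    · rw [h₃ h, abs_of_pos h]; ring
  linarith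

lemma rectVelocity_Jmap_of_normal {p n : E2 1} (hp : p ∈ rect a b)
    (hn : ∀ u ∈ rect a b, ip (u - p) n ≤ 0) :
    RectVelocity a b (p 0) (p 1) (Jmap n 0) (Jmap n 1) := by
  obtain ⟨⟨ha, hb⟩, hl, hu⟩ := hp
  have hcone (u v : ℝ) (hu : u ∈ Icc a b) (hv : v ∈ Icc (-1) 1) :
      (u - p 0) * n 0 + (v - p 1) * n 1 ≤ 0 := by
    simpa [ip_eq] using hn (vec2 u v) ⟨hu, hv⟩
  rw [Jmap_apply_zero, Jmap_apply_one]
  refine ⟨fun h => ?_, fun h => ?_, fun h => ?_, fun h => ?_⟩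
  · nlinarith [hcone b (p 1) ⟨ha.trans hb, le_rfl⟩ ⟨hl, hu⟩]
  · nlinarith [hcone a (p 1) ⟨le_rfl, ha.trans hb⟩ ⟨hl, hu⟩]
  · nlinarith [hcone (p 0) (-1) ⟨ha, hb⟩ ⟨le_rfl, by norm_num⟩]
  · nlinarith [hcone (p 0) 1 ⟨ha, hb⟩ ⟨by norm_num, le_rfl⟩]

end RectVelocity

section RectChord

variable {a b T : ℝ} {x y x' y' : ℝ → ℝ}

lemma exists_side_crossing_of_neg (hab : a < b) (hx : IsPrimitiveOn x x' T)
    (hy : IsPrimitiveOn y y' T)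
    (hv : ∀ᵐ s, s ∈ Ioo 0 T → RectVelocity a b (x s) (y s) (x' s) (y' s))
    (hy0 : y 0 = 0) (hyT : y T = 0) {σ : ℝ} (hσ : σ ∈ Icc 0 T) (hyσ : y σ < 0) :
    ∃ t₁ ∈ Icc 0 T, ∃ t₂ ∈ Icc 0 T, ∃ t₃ ∈ Icc 0 T,
      t₁ ≤ t₂ ∧ |x t₂ - x t₁| = b - a ∧ |y t₃| = 1 := by
  have h0 : (0 : ℝ) ∈ Icc 0 T := ⟨le_rfl, hσ.1.trans hσ.2⟩
  have hT : T ∈ Icc 0 T := ⟨hσ.1.trans hσ.2, le_rfl⟩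
  have mem {s u v : ℝ} (hs : s ∈ Ioo u v) (hu : u ∈ Icc 0 T) (hv : v ∈ Icc 0 T) :
      s ∈ Icc 0 T :=
    ⟨hu.1.trans hs.1.le, hs.2.le.trans hv.2⟩
  -- `y` decreases somewhere before `σ`, which happens on the left side `x = a`,
  obtain ⟨t₁, ht₁, hdown, hv₁⟩ := hy.neg.exists_deriv_pos hv h0 hσ hσ.1 (by simp [hy0, hyσ])
  -- and increases somewhere after `σ`, on the right side `x = b`;
  obtain ⟨t₂, ht₂, hup, hv₂⟩ := hy.exists_deriv_pos hv hσ hT hσ.2 (by rw [hyT]; exact hyσ)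
  have hx₁ : x t₁ = a := hv₁.2.1 (neg_pos.1 hdown)
  have hx₂ : x t₂ = b := hv₂.1 hup
  have h12 : t₁ ≤ t₂ := ht₁.2.le.trans ht₂.1.le
  -- in between, `x` increases somewhere, which happens on the bottom side `y = -1`.
  obtain ⟨t₃, ht₃, hright, hv₃⟩ :=
    hx.exists_deriv_pos hv (mem ht₁ h0 hσ) (mem ht₂ hσ hT) h12 (by rw [hx₁, hx₂]; exact hab)
  refine ⟨t₁, mem ht₁ h0 hσ, t₂, mem ht₂ hσ hT, t₃, mem ht₃ (mem ht₁ h0 hσ) (mem ht₂ hσ hT),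
    h12, ?_, ?_⟩
  · rw [hx₁, hx₂, abs_of_pos (sub_pos.2 hab)]
  · rw [hv₃.2.2.1 hright, abs_neg, abs_one]

lemma exists_side_crossing (hab : a < b) (hx : IsPrimitiveOn x x' T)
    (hy : IsPrimitiveOn y y' T)
    (hv : ∀ᵐ s, s ∈ Ioo 0 T → RectVelocity a b (x s) (y s) (x' s) (y' s))
    (hy0 : y 0 = 0) (hyT : y T = 0) {σ : ℝ} (hσ : σ ∈ Icc 0 T) (hyσ : y σ ≠ 0) :
    ∃ t₁ ∈ Icc 0 T, ∃ t₂ ∈ Icc 0 T, ∃ t₃ ∈ Icc 0 T,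
      t₁ ≤ t₂ ∧ |x t₂ - x t₁| = b - a ∧ |y t₃| = 1 := by
  rcases hyσ.lt_or_gt with hneg | hpos
  · exact exists_side_crossing_of_neg hab hx hy hv hy0 hyT hσ hneg
  -- the point reflection `z ↦ -z` exchanges the two cases
  obtain ⟨t₁, ht₁, t₂, ht₂, t₃, ht₃, h12, hx12, hy₃⟩ :=
    exists_side_crossing_of_neg (neg_lt_neg hab) hx.neg hy.neg
      (hv.mono fun s hs hsI => (hs hsI).neg) (by simp [hy0]) (by simp [hyT]) hσ
      (neg_lt_zero.2 hpos)
  refine ⟨t₁, ht₁, t₂, ht₂, t₃, ht₃, h12, ?_, by rwa [abs_neg] at hy₃⟩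
  rw [← abs_neg, neg_sub, ← neg_sub_neg, hx12, neg_sub_neg]

lemma exists_ne_zero_of_nonconstant (hx : IsPrimitiveOn x x' T)
    (hv : ∀ᵐ s, s ∈ Ioo 0 T → RectVelocity a b (x s) (y s) (x' s) (y' s))
    (hne : ∃ t ∈ Icc 0 T, x t ≠ x 0 ∨ y t ≠ y 0) : ∃ σ ∈ Icc 0 T, y σ ≠ 0 := by
  by_contra! hy
  -- horizontal motion only happens on the sides `y = ±1`
  have hx' : ∀ᵐ s, s ∈ Ioo 0 T → x' s = 0 := by
    filter_upwards [hv] with s hs hsI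
    have hys := hy s (Ioo_subset_Icc_self hsI)
    rcases lt_trichotomy (x' s) 0 with h | h | h
    · linarith [(hs hsI).2.2.2 h]
    · exact h
    · linarith [(hs hsI).2.2.1 h]
  obtain ⟨t, ht, hxt | hyt⟩ := hne
  · exact hxt (hx.eq_of_ae_deriv_eq_zero hx' ht)
  · exact hyt (by rw [hy t ht, hy 0 ⟨le_rfl, ht.1.trans ht.2⟩])

lemma two_mul_sub_le_integral (hab : a < b) (hx : IsPrimitiveOn x x' T)
    (hy : IsPrimitiveOn y y' T)
    (hv : ∀ᵐ s, s ∈ Ioo 0 T → RectVelocity a b (x s) (y s) (x' s) (y' s))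
    (hy0 : y 0 = 0) (hyT : y T = 0) (hne : ∃ t ∈ Icc 0 T, x t ≠ x 0 ∨ y t ≠ y 0) :
    2 * (b - a) ≤ ∫ s in 0..T, (y' s * x s - x' s * y s) := by
  obtain ⟨σ, hσ, hyσ⟩ := exists_ne_zero_of_nonconstant hx hv hne
  obtain ⟨t₁, ht₁, t₂, ht₂, t₃, ht₃, h12, hx12, hy₃⟩ :=
    exists_side_crossing hab hx hy hv hy0 hyT hσ hyσ
  have h0 : (0 : ℝ) ∈ Icc 0 T := ⟨le_rfl, hσ.1.trans hσ.2⟩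
  have hT : T ∈ Icc 0 T := ⟨hσ.1.trans hσ.2, le_rfl⟩
  have hVx : b - a ≤ ∫ s in 0..T, |x' s| :=
    hx12 ▸ (hx.abs_sub_le_integral_abs ht₁ ht₂ h12).trans
      (integral_mono_interval ht₁.1 h12 ht₂.2 (ae_of_all _ fun _ => abs_nonneg _)
        (hx.intervalIntegrable h0 hT).abs)
  have hVy : 2 ≤ ∫ s in 0..T, |y' s| := by
    have h₁ := hy.abs_sub_le_integral_abs h0 ht₃ ht₃.1
    have h₂ := hy.abs_sub_le_integral_abs ht₃ hT ht₃.2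
    rw [hy0, sub_zero, hy₃] at h₁
    rw [hyT, zero_sub, abs_neg, hy₃] at h₂
    rw [hy.integral_abs_eq_add ht₃]
    linarith
  have hy' : IntervalIntegrable y' volume 0 T := hy.1
  have hx' : IntervalIntegrable x' volume 0 T := hx.1
  have hint : ∫ s in 0..T, (y' s * x s - x' s * y s)
      = (a + b) / 2 * (y T - y 0) + (b - a) / 2 * (∫ s in 0..T, |y' s|)
        + ∫ s in 0..T, |x' s| := by
    rw [integral_congr_ae ((ae_uIoc_of_ae_Ioo hv hT).mono fun s hs hsI =>
        (hs hsI).mul_sub_mul_eq),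
      integral_add ((hy'.const_mul _).add (hy'.abs.const_mul _)) hx'.abs,
      integral_add (hy'.const_mul _) (hy'.abs.const_mul _), intervalIntegral.integral_const_mul,
      intervalIntegral.integral_const_mul, hy.integral_eq_sub h0 hT]
  rw [hint, hy0, hyT]
  nlinarith

end RectChord

lemma isPrimitiveOn_apply {T : ℝ} {z dz : ℝ → E2 1} (hdz : IntervalIntegrable dz volume 0 T)
    (hz : ∀ t ∈ Icc 0 T, z t = z 0 + ∫ s in 0..t, dz s) (i : Fin (2 * 1)) :
    IsPrimitiveOn (fun s => z s i) (fun s => dz s i) T := by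
  refine ⟨⟨hdz.1.eval i, hdz.2.eval i⟩, fun t ht => ?_⟩
  have hdzt := hdz.mono_set (uIcc_subset_uIcc_left (Icc_subset_uIcc ht))
  change z t i = z 0 i + ∫ s in 0..t, dz s i
  rw [hz t ht, Pi.add_apply]
  exact congrArg _ ((ContinuousLinearMap.proj (R := ℝ) i).intervalIntegral_comp_comm hdzt).symm

lemma le_of_mem_glcActions_rect {a b A : ℝ} (hab : a < b)
    (hA : A ∈ glcActions 1 0 (rect a b)) : b - a ≤ A := by
  obtain ⟨-, T, z, dz, ⟨hT, hdz, hz, hfr, h0, hT0, -, hnormal, t, ht, hzt⟩, rfl⟩ := hA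
  have hv : ∀ᵐ s, s ∈ Ioo 0 T →
      RectVelocity a b (z s 0) (z s 1) (dz s 0) (dz s 1) := by
    filter_upwards [hnormal] with s hs hsI
    obtain ⟨n, hn, hdzn⟩ := hs hsI
    rw [hdzn]
    exact rectVelocity_Jmap_of_normal
      ((isClosed_rect a b).frontier_subset (hfr s (Ioo_subset_Icc_self hsI))) hn
  have key := two_mul_sub_le_integral hab (isPrimitiveOn_apply hdz hz 0)
    (isPrimitiveOn_apply hdz hz 1) hv (mem_Rnk_one_zero.1 h0) (mem_Rnk_one_zero.1 hT0)
    ⟨t, ht, not_and_or.1 fun h => hzt (funext (Fin.forall_fin_two.2 h))⟩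
  simp only [pathAction, ip_neg_Jmap]
  linarith

section PiecewiseConstant

variable {E : Type*} [NormedAddCommGroup E] [NormedSpace ℝ E] [CompleteSpace E] {g : ℝ → E}

lemma intervalIntegrable_and_integral_eq_of_eqOn_Ioo {u v : ℝ} {c : E} (huv : u ≤ v)
    (h : EqOn g (fun _ => c) (Ioo u v)) :
    IntervalIntegrable g volume u v ∧ ∫ s in u..v, g s = (v - u) • c :=
  ⟨(intervalIntegrable_congr_uIoo (uIoo_of_le huv ▸ h)).2 intervalIntegrable_const,
    (integral_congr_Ioo_of_le huv h).trans (intervalIntegral.integral_const c)⟩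

lemma intervalIntegrable_and_integral_eq_of_three_pieces {t₁ t₂ t₃ : ℝ} {c₁ c₂ c₃ : E}
    (h₁ : 0 ≤ t₁) (h₂ : t₁ ≤ t₂) (h₃ : t₂ ≤ t₃) (hg₁ : EqOn g (fun _ => c₁) (Ioo 0 t₁))
    (hg₂ : EqOn g (fun _ => c₂) (Ioo t₁ t₂)) (hg₃ : EqOn g (fun _ => c₃) (Ioo t₂ t₃)) :
    IntervalIntegrable g volume 0 t₃ ∧
      ∫ s in 0..t₃, g s = t₁ • c₁ + (t₂ - t₁) • c₂ + (t₃ - t₂) • c₃ := by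
  obtain ⟨i₁, e₁⟩ := intervalIntegrable_and_integral_eq_of_eqOn_Ioo h₁ hg₁
  obtain ⟨i₂, e₂⟩ := intervalIntegrable_and_integral_eq_of_eqOn_Ioo h₂ hg₂
  obtain ⟨i₃, e₃⟩ := intervalIntegrable_and_integral_eq_of_eqOn_Ioo h₃ hg₃
  refine ⟨(i₁.trans i₂).trans i₃, ?_⟩
  rw [← integral_add_adjacent_intervals (i₁.trans i₂) i₃,
    ← integral_add_adjacent_intervals i₁ i₂, e₁, e₂, e₃, sub_zero]

end PiecewiseConstant

section ExplicitChord

variable {a b : ℝ}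

def chord (a b s : ℝ) : E2 1 :=
  if s ≤ 1 then vec2 b s
  else if s ≤ 1 + (b - a) then vec2 (b + 1 - s) 1
  else vec2 a (2 + (b - a) - s)

def chordNormal (a b s : ℝ) : E2 1 :=
  if s ≤ 1 then vec2 1 0 else if s ≤ 1 + (b - a) then vec2 0 1 else vec2 (-1) 0

lemma chord_mem_frontier (hab : a ≤ b) {s : ℝ} (hs : s ∈ Icc 0 (2 + (b - a))) :
    chord a b s ∈ frontier (rect a b) := by
  obtain ⟨hs₀, hsT⟩ := hs
  unfold chord
  split_ifs with h₁ h₂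
  · exact mem_frontier_rect (vec2_mem_rect.2 ⟨⟨hab, le_rfl⟩, by linarith, h₁⟩) (by simp)
  · exact mem_frontier_rect (vec2_mem_rect.2 ⟨⟨by linarith, by linarith⟩, by norm_num⟩) (by simp)
  · exact mem_frontier_rect (vec2_mem_rect.2 ⟨⟨le_rfl, hab⟩, by linarith, by linarith⟩) (by simp)

lemma chordNormal_mem_normalCone (s : ℝ) :
    ∀ u ∈ rect a b, ip (u - chord a b s) (chordNormal a b s) ≤ 0 := by
  rintro u ⟨⟨ha, hb⟩, -, h1⟩
  unfold chord chordNormal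
  split_ifs <;> simp only [ip_eq, Pi.sub_apply, vec2_apply_zero, vec2_apply_one] <;> linarith

lemma intervalIntegrable_and_chord_eq (hab : a ≤ b) {t : ℝ} (ht : t ∈ Icc 0 (2 + (b - a))) :
    IntervalIntegrable (fun s => Jmap (chordNormal a b s)) volume 0 t ∧
      chord a b t = chord a b 0 + ∫ s in 0..t, Jmap (chordNormal a b s) := by
  obtain ⟨ht₀, htT⟩ := ht
  have lt_of_min_lt {c s : ℝ} (hs : min t c < s) (hst : s < t) : c < s :=
    (min_lt_iff.1 hs).resolve_left hst.not_gt
  obtain ⟨hint, heq⟩ := intervalIntegrable_and_integral_eq_of_three_pieces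
    (g := fun s => Jmap (chordNormal a b s)) (c₁ := vec2 0 1) (c₂ := vec2 (-1) 0)
    (c₃ := vec2 0 (-1))
    (le_min ht₀ zero_le_one) (min_le_min_left t (by linarith)) (min_le_left t (1 + (b - a)))
    (fun s hs => by simp [chordNormal, hs.2.trans_le (min_le_right _ _) |>.le, Jmap_vec2])
    (fun s hs => by
      have hs₂ := hs.2.trans_le (min_le_left _ _)
      simp [chordNormal, (lt_of_min_lt hs.1 hs₂).not_ge, hs.2.trans_le (min_le_right _ _) |>.le,
        Jmap_vec2])
    (fun s hs => by
      have h := lt_of_min_lt hs.1 hs.2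
      simp [chordNormal, h.not_ge, (show (1 : ℝ) < s by linarith).not_ge, Jmap_vec2])
  refine ⟨hint, ?_⟩
  rw [heq, show chord a b 0 = vec2 b 0 from if_pos zero_le_one]
  simp only [smul_vec2, vec2_add_vec2, chord]
  split_ifs with h₁ h₂
  · rw [min_eq_left h₁, min_eq_left (by linarith)]
    congr 1 <;> ring
  · rw [min_eq_right (by linarith), min_eq_left h₂]
    congr 1 <;> ring
  · rw [min_eq_right (by linarith), min_eq_right (by linarith)]
    congr 1 <;> ring

lemma pathAction_chord (hab : a < b) :
    pathAction (2 + (b - a)) (chord a b) (fun s => Jmap (chordNormal a b s)) = b - a := by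
  obtain ⟨-, heq⟩ := intervalIntegrable_and_integral_eq_of_three_pieces
    (g := fun s => ip (chordNormal a b s) (chord a b s)) (c₁ := b) (c₂ := 1) (c₃ := -a)
    zero_le_one (by linarith : (1 : ℝ) ≤ 1 + (b - a)) (by linarith : 1 + (b - a) ≤ 2 + (b - a))
    (fun s hs => by simp [chordNormal, chord, hs.2.le, ip_eq])
    (fun s hs => by simp [chordNormal, chord, hs.1.not_ge, hs.2.le, ip_eq])
    (fun s hs => by
      simp [chordNormal, chord, hs.1.not_ge, (show (1 : ℝ) < s by linarith [hs.1]).not_ge,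
        ip_eq])
  simp only [pathAction, neg_Jmap_Jmap, heq, smul_eq_mul]
  ring

lemma sub_mem_glcActions_rect (hab : a < b) : b - a ∈ glcActions 1 0 (rect a b) := by
  have hL : 0 < b - a := sub_pos.2 hab
  have h0 : chord a b 0 = vec2 b 0 := if_pos zero_le_one
  have h1 : chord a b 1 = vec2 b 1 := if_pos le_rfl
  have hT : chord a b (2 + (b - a)) = vec2 a 0 := by
    rw [chord, if_neg (by linarith), if_neg (by linarith), sub_self]
  refine ⟨hL, 2 + (b - a), chord a b, fun s => Jmap (chordNormal a b s),
    ⟨by linarith, (intervalIntegrable_and_chord_eq hab.le ⟨by linarith, le_rfl⟩).1,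
      fun t ht => (intervalIntegrable_and_chord_eq hab.le ht).2,
      fun t ht => chord_mem_frontier hab.le ht, ?_, ?_, ?_,
      ae_of_all _ fun s _ => ⟨chordNormal a b s, chordNormal_mem_normalCone s, rfl⟩,
      1, ⟨zero_le_one, by linarith⟩, ?_⟩, pathAction_chord hab⟩
  · rw [mem_Rnk_one_zero, h0, vec2_apply_one]
  · rw [mem_Rnk_one_zero, hT, vec2_apply_one]
  · rw [mem_V0nk_one_zero, Pi.sub_apply, h0, hT, vec2_apply_one, vec2_apply_one, sub_zero]
  · rw [h1, h0]
    exact fun h => one_ne_zero (congrFun h 1)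

end ExplicitChord

lemma isLeast_glcActions_rect {a b : ℝ} (hab : a < b) :
    IsLeast (glcActions 1 0 (rect a b)) (b - a) :=
  ⟨sub_mem_glcActions_rect hab, fun _ hA => le_of_mem_glcActions_rect hab hA⟩

/-- Remark 1.4, second part: for the square `P = [-1,1]²` cut by the
vertical line `L_t = {x = t}`, `t ∈ (-1,1)`, into `P₊ = P ∩ {x ≥ t}` and
`P₋ = P ∩ {x ≤ t}`, one has `c(P₊) = 1 - t`, `c(P₋) = 1 + t` and `c(P) = 2`, so that
`c(P₊) + c(P₋) = c(P)`, where `c` is the minimal positive action of generalized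
leafwise chords for `ℝ^{1,0}`. -/
theorem square_vertical_cut_additivity (t : ℝ) (ht1 : -1 < t) (ht2 : t < 1) :
    IsLeast (glcActions 1 0 ({p : E2 1 | |p 0| ≤ 1 ∧ |p 1| ≤ 1} ∩ {p : E2 1 | t ≤ p 0}))
      (1 - t) ∧
    IsLeast (glcActions 1 0 ({p : E2 1 | |p 0| ≤ 1 ∧ |p 1| ≤ 1} ∩ {p : E2 1 | p 0 ≤ t}))
      (1 + t) ∧
    IsLeast (glcActions 1 0 {p : E2 1 | |p 0| ≤ 1 ∧ |p 1| ≤ 1}) 2 ∧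
    (1 - t) + (1 + t) = (2 : ℝ) := by
  have hP : {p : E2 1 | |p 0| ≤ 1 ∧ |p 1| ≤ 1} = rect (-1) 1 := by
    ext p; simp [rect, abs_le]
  have hright : {p : E2 1 | |p 0| ≤ 1 ∧ |p 1| ≤ 1} ∩ {p : E2 1 | t ≤ p 0} = rect t 1 := by
    ext p; simp only [rect, mem_inter_iff, mem_ofPred_eq, mem_Icc, abs_le]; grind
  have hleft : {p : E2 1 | |p 0| ≤ 1 ∧ |p 1| ≤ 1} ∩ {p : E2 1 | p 0 ≤ t} = rect (-1) t := by
    ext p; simp only [rect, mem_inter_iff, mem_ofPred_eq, mem_Icc, abs_le]; grind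
  refine ⟨?_, ?_, ?_, by ring⟩
  · rw [hright]
    exact isLeast_glcActions_rect ht2
  · rw [hleft, show 1 + t = t - -1 by ring]
    exact isLeast_glcActions_rect ht1
  · rw [hP, show (2 : ℝ) = 1 - -1 by norm_num]
    exact isLeast_glcActions_rect (by norm_num)
end
end

section
/- Given a finite sequence of pairwise distinct vectors v_1,…,v_k ∈ ℝ^{2n}, if z ∈ H¹([0,1],ℝ^{2n}) is a piecewise affine path with ż(t) = Σ_{i=1}^m χ_{I_i}(t) w_i where w_i ∈ {v_1,…,v_k} for each i and (I_i = (τ_{i−1}, τ_i))_{i=1}^m is a partition of [0,1], then there exists a piecewise affine path z' such that ż'(t) ∈ {v_1,…,v_k} for almost every t, z'(0) = z(0), z'(1) = z(1), the set {t : ż'(t) = v_j} is connected for every j = 1,…,k, and ∫₀¹ ⟨−Jż'(t), z'(t)⟩ dt ≥ ∫₀¹ ⟨−Jż(t), z(t)⟩ dt. -/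
open MeasureTheory Set

noncomputable section

/-- The step function with value `w i` on the `i`-th open interval of the partition `τ`. -/
def stepFn {n : ℕ} (m : ℕ) (τ : Fin (m + 1) → ℝ) (w : Fin m → E2 n) : ℝ → E2 n :=
  fun t => ∑ i : Fin m, Set.indicator (Set.Ioo (τ i.castSucc) (τ i.succ)) (fun _ => w i) t

/-- A partition `0 = τ₀ ≤ τ₁ ≤ … ≤ τ_m = 1` of `[0,1]` (intervals may be empty). -/
def IsPartition (m : ℕ) (τ : Fin (m + 1) → ℝ) : Prop :=
  Monotone τ ∧ τ 0 = 0 ∧ τ (Fin.last m) = 1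

/-!
The action `∫ ⟨-Jż, z⟩` of a piecewise affine path depends only on its starting point and its
list of segments `(ℓᵢ, wᵢ)` (duration, velocity): it is
`⟨-J(∑ ℓᵢ wᵢ), z(0)⟩ + ∑_{j<i} ℓᵢ ℓⱼ ⟨-J wᵢ, wⱼ⟩`.
Let two segments `(ℓ, u)` and `(ℓ', u)` with the same velocity be separated by a block of
displacement `d`. Moving the second one forward to merge it with the first changes the action
by `2ℓ'⟨-Jd, u⟩`, moving the first one back to merge it with the second changes it by
`-2ℓ⟨-Jd, u⟩`; both moves keep duration and displacement, and one of them does not decrease the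
action. Merging until no velocity repeats gives the required path.
-/

variable {n : ℕ}

lemma Jmap_add (x y : E2 n) : Jmap (x + y) = Jmap x + Jmap y := by
  funext i; by_cases h : (i : ℕ) < n <;> simp [Jmap, h, add_comm]

lemma Jmap_smul (c : ℝ) (x : E2 n) : Jmap (c • x) = c • Jmap x := by
  funext i; by_cases h : (i : ℕ) < n <;> simp [Jmap, h]

def actionForm : E2 n →ₗ[ℝ] E2 n →ₗ[ℝ] ℝ :=
  LinearMap.mk₂ ℝ (fun u y => ip (-(Jmap u)) y)
    (fun u₁ u₂ y => by simp [ip, Jmap_add, add_mul, Finset.sum_add_distrib]; ring)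
    (fun c u y => by simp [ip, Jmap_smul, Finset.mul_sum, mul_assoc])
    (fun u y₁ y₂ => by simp [ip, mul_add, Finset.sum_add_distrib])
    (fun c u y => by simp [ip, Finset.mul_sum, mul_left_comm])

lemma actionForm_apply (u y : E2 n) : actionForm u y = ip (-(Jmap u)) y := rfl

lemma sum_fin_two_mul (f : Fin (2 * n) → ℝ) :
    ∑ i, f i = ∑ j : Fin n, (f ⟨j, by omega⟩ + f ⟨j + n, by omega⟩) := by
  rw [← Equiv.sum_comp (finSumFinEquiv.trans (finCongr (two_mul n).symm)) f,
    Fintype.sum_sum_type, ← Finset.sum_add_distrib]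
  simp only [Equiv.trans_apply, finSumFinEquiv_apply_left, finSumFinEquiv_apply_right,
    finCongr_apply]
  refine Finset.sum_congr rfl fun j _ => ?_
  congr 2; simp [Fin.ext_iff, add_comm]

lemma actionForm_swap (u v : E2 n) : actionForm u v = -actionForm v u := by
  rw [actionForm_apply, actionForm_apply, ip, ip, sum_fin_two_mul, sum_fin_two_mul,
    ← Finset.sum_neg_distrib]
  refine Finset.sum_congr rfl fun j _ => ?_
  have hlo : ¬ (j : ℕ) + n < n := by omega
  simp [Jmap, j.isLt, hlo]
  ring

lemma actionForm_self (u : E2 n) : actionForm u u = 0 := by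
  linarith [actionForm_swap u u]

/-- A segment `(ℓ, u)` of a piecewise affine path: velocity `u` during a time interval of
length `ℓ`. -/
abbrev Segment (n : ℕ) := ℝ × E2 n

def duration (s : List (Segment n)) : ℝ := (s.map Prod.fst).sum

def displacement (s : List (Segment n)) : E2 n := (s.map fun p => p.1 • p.2).sum

/-- The action of the path that starts at the origin and runs through the segments `s`. -/
def segmentAction : List (Segment n) → ℝ
  | [] => 0
  | p :: s => actionForm (displacement s) (p.1 • p.2) + segmentAction s

@[simp] lemma duration_nil : duration ([] : List (Segment n)) = 0 := rfl

@[simp] lemma duration_cons (p : Segment n) (s : List (Segment n)) :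
    duration (p :: s) = p.1 + duration s := List.sum_cons

@[simp] lemma duration_append (s t : List (Segment n)) :
    duration (s ++ t) = duration s + duration t := by simp [duration]

@[simp] lemma displacement_nil : displacement ([] : List (Segment n)) = 0 := rfl

@[simp] lemma displacement_cons (p : Segment n) (s : List (Segment n)) :
    displacement (p :: s) = p.1 • p.2 + displacement s := List.sum_cons

@[simp] lemma displacement_append (s t : List (Segment n)) :
    displacement (s ++ t) = displacement s + displacement t := by simp [displacement]

@[simp] lemma segmentAction_nil : segmentAction ([] : List (Segment n)) = 0 := rfl

@[simp] lemma segmentAction_cons (p : Segment n) (s : List (Segment n)) :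
    segmentAction (p :: s) = actionForm (displacement s) (p.1 • p.2) + segmentAction s := rfl

lemma segmentAction_append (s t : List (Segment n)) :
    segmentAction (s ++ t) =
      segmentAction s + segmentAction t + actionForm (displacement t) (displacement s) := by
  induction s with
  | nil => simp
  | cons p s ih => simp only [List.cons_append, segmentAction_cons, ih, displacement_append,
      displacement_cons, map_add, LinearMap.add_apply]; ring

lemma segmentAction_merge_left (X B C : List (Segment n)) (ℓ ℓ' : ℝ) (u : E2 n) :
    segmentAction (X ++ (ℓ + ℓ', u) :: (B ++ C)) =
      segmentAction (X ++ (ℓ, u) :: (B ++ (ℓ', u) :: C)) +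
        2 * ℓ' * actionForm (displacement B) u := by
  simp only [segmentAction_append, segmentAction_cons, displacement_append, displacement_cons,
    map_add, map_smul, LinearMap.add_apply, LinearMap.smul_apply, smul_eq_mul, add_smul,
    actionForm_self]
  rw [actionForm_swap u (displacement B)]
  ring

lemma segmentAction_merge_right (X B C : List (Segment n)) (ℓ ℓ' : ℝ) (u : E2 n) :
    segmentAction (X ++ B ++ (ℓ + ℓ', u) :: C) =
      segmentAction (X ++ (ℓ, u) :: (B ++ (ℓ', u) :: C)) -
        2 * ℓ * actionForm (displacement B) u := by
  simp only [segmentAction_append, segmentAction_cons, displacement_append, displacement_cons,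
    map_add, map_smul, LinearMap.add_apply, LinearMap.smul_apply, smul_eq_mul, add_smul,
    actionForm_self]
  rw [actionForm_swap u (displacement B)]
  ring

structure Improves (s' s : List (Segment n)) : Prop where
  nonneg : ∀ p ∈ s', 0 ≤ p.1
  sublist : (s'.map Prod.snd).Sublist (s.map Prod.snd)
  duration_eq : duration s' = duration s
  displacement_eq : displacement s' = displacement s
  segmentAction_le : segmentAction s ≤ segmentAction s'

lemma Improves.refl {s : List (Segment n)} (hs : ∀ p ∈ s, 0 ≤ p.1) : Improves s s :=
  ⟨hs, List.Sublist.refl _, rfl, rfl, le_rfl⟩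

lemma Improves.trans {s'' s' s : List (Segment n)} (h₁ : Improves s'' s') (h₂ : Improves s' s) :
    Improves s'' s :=
  ⟨h₁.nonneg, h₁.sublist.trans h₂.sublist, h₁.duration_eq.trans h₂.duration_eq,
    h₁.displacement_eq.trans h₂.displacement_eq,
    h₂.segmentAction_le.trans h₁.segmentAction_le⟩

section Merge

variable {X B C : List (Segment n)} {ℓ ℓ' : ℝ} {u : E2 n}

lemma improves_merge_left (hs : ∀ p ∈ X ++ (ℓ, u) :: (B ++ (ℓ', u) :: C), 0 ≤ p.1)
    (hB : 0 ≤ actionForm (displacement B) u) :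
    Improves (X ++ (ℓ + ℓ', u) :: (B ++ C)) (X ++ (ℓ, u) :: (B ++ (ℓ', u) :: C)) where
  nonneg := by
    simp only [List.mem_append, List.mem_cons] at hs ⊢
    rintro p (hp | rfl | hp | hp)
    · exact hs p (by simp [hp])
    · exact add_nonneg (hs (ℓ, u) (by simp)) (hs (ℓ', u) (by simp))
    all_goals exact hs p (by simp [hp])
  sublist := by simp
  duration_eq := by simp; ring
  displacement_eq := by simp [add_smul]; abel
  segmentAction_le := by
    rw [segmentAction_merge_left]
    have := hs (ℓ', u) (by simp)
    nlinarith

lemma improves_merge_right (hs : ∀ p ∈ X ++ (ℓ, u) :: (B ++ (ℓ', u) :: C), 0 ≤ p.1)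
    (hB : actionForm (displacement B) u ≤ 0) :
    Improves (X ++ B ++ (ℓ + ℓ', u) :: C) (X ++ (ℓ, u) :: (B ++ (ℓ', u) :: C)) where
  nonneg := by
    simp only [List.mem_append, List.mem_cons] at hs ⊢
    rintro p ((hp | hp) | rfl | hp)
    · exact hs p (by simp [hp])
    · exact hs p (by simp [hp])
    · exact add_nonneg (hs (ℓ, u) (by simp)) (hs (ℓ', u) (by simp))
    · exact hs p (by simp [hp])
  sublist := by simp
  duration_eq := by simp; ring
  displacement_eq := by simp [add_smul]; abel
  segmentAction_le := by
    rw [segmentAction_merge_right]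
    have := hs (ℓ, u) (by simp)
    nlinarith

end Merge

lemma List.exists_eq_append_cons_append_cons_of_not_nodup_map {α β : Type*} (f : α → β)
    {l : List α} (hl : ¬ (l.map f).Nodup) :
    ∃ (A : List α) (p : α) (B : List α) (q : α) (C : List α),
      l = A ++ p :: (B ++ q :: C) ∧ f p = f q := by
  induction l with
  | nil => exact absurd List.nodup_nil hl
  | cons a t ih =>
    rw [List.map_cons, List.nodup_cons, not_and_or, not_not] at hl
    by_cases hmem : f a ∈ t.map f
    · obtain ⟨q, hq, hfq⟩ := List.mem_map.1 hmem
      obtain ⟨B, C, rfl⟩ := List.append_of_mem hq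
      exact ⟨[], a, B, q, C, rfl, hfq.symm⟩
    · obtain ⟨A, p, B, q, C, rfl, hf⟩ := ih (hl.resolve_left hmem)
      exact ⟨a :: A, p, B, q, C, rfl, hf⟩

lemma exists_improves_shorter {s : List (Segment n)} (hs : ∀ p ∈ s, 0 ≤ p.1)
    (hdup : ¬ (s.map Prod.snd).Nodup) : ∃ s', s'.length < s.length ∧ Improves s' s := by
  obtain ⟨X, ⟨ℓ, u⟩, B, ⟨ℓ', u'⟩, C, rfl, rfl : u = u'⟩ :=
    List.exists_eq_append_cons_append_cons_of_not_nodup_map Prod.snd hdup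
  rcases le_total 0 (actionForm (displacement B) u) with hB | hB
  · exact ⟨_, by simp, improves_merge_left hs hB⟩
  · exact ⟨_, by simp, improves_merge_right hs hB⟩

theorem exists_improves_nodup {s : List (Segment n)} (hs : ∀ p ∈ s, 0 ≤ p.1) :
    ∃ s', Improves s' s ∧ (s'.map Prod.snd).Nodup := by
  induction hlen : s.length using Nat.strong_induction_on generalizing s with
  | _ N ih =>
    by_cases hnodup : (s.map Prod.snd).Nodup
    · exact ⟨s, Improves.refl hs, hnodup⟩
    obtain ⟨s₁, hlt, h₁⟩ := exists_improves_shorter hs hnodup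
    obtain ⟨s', h', hnodup'⟩ := ih _ (hlen ▸ hlt) h₁.nonneg rfl
    exact ⟨s', h'.trans h₁, hnodup'⟩

section Partition

variable {m : ℕ} {τ : Fin (m + 1) → ℝ} {w : Fin m → E2 n}

def segments (m : ℕ) (τ : Fin (m + 1) → ℝ) (w : Fin m → E2 n) : List (Segment n) :=
  List.ofFn fun i => (τ i.succ - τ i.castSucc, w i)

lemma segments_succ (τ : Fin (m + 2) → ℝ) (w : Fin (m + 1) → E2 n) :
    segments (m + 1) τ w =
      (τ 1 - τ 0, w 0) :: segments m (fun i => τ i.succ) (fun i => w i.succ) := by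
  simp [segments, List.ofFn_succ]

lemma segments_nonneg (hτ : Monotone τ) : ∀ p ∈ segments m τ w, 0 ≤ p.1 := by
  simp only [segments, List.mem_ofFn, forall_exists_index]
  rintro _ i rfl
  exact sub_nonneg.2 (hτ (Fin.castSucc_le_succ i))

lemma map_snd_segments : (segments m τ w).map Prod.snd = List.ofFn w := by
  simp [segments, List.map_ofFn, Function.comp_def]

lemma duration_segments (τ : Fin (m + 1) → ℝ) (w : Fin m → E2 n) :
    duration (segments m τ w) = τ (Fin.last m) - τ 0 := by
  induction m with
  | zero => simp [segments]
  | succ m ih => rw [segments_succ, duration_cons, ih, Fin.succ_last]; simp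

def partitionOf (s : List (Segment n)) : Fin (s.length + 1) → ℝ := fun i => duration (s.take i)

def velocitiesOf (s : List (Segment n)) : Fin s.length → E2 n := fun i => s[i].2

lemma partitionOf_succ_sub_castSucc (s : List (Segment n)) (i : Fin s.length) :
    partitionOf s i.succ - partitionOf s i.castSucc = s[i].1 := by
  simp only [partitionOf, Fin.val_succ, Fin.val_castSucc, List.take_add_one, duration,
    List.map_append, List.sum_append, List.getElem?_eq_getElem i.isLt]
  simp

lemma segments_partitionOf (s : List (Segment n)) :
    segments s.length (partitionOf s) (velocitiesOf s) = s := by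
  refine List.ext_getElem (by simp [segments]) fun i h₁ h₂ => ?_
  simp only [segments, List.getElem_ofFn]
  rw [partitionOf_succ_sub_castSucc s ⟨i, h₂⟩]
  rfl

lemma isPartition_partitionOf {s : List (Segment n)} (hs : ∀ p ∈ s, 0 ≤ p.1)
    (h : duration s = 1) : IsPartition s.length (partitionOf s) := by
  refine ⟨Fin.monotone_iff_le_succ.2 fun i => ?_, by simp [partitionOf], ?_⟩
  · rw [← sub_nonneg, partitionOf_succ_sub_castSucc]
    exact hs _ (List.getElem_mem _)
  · simpa [partitionOf] using h

lemma velocitiesOf_mem (s : List (Segment n)) (i : Fin s.length) :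
    velocitiesOf s i ∈ s.map Prod.snd :=
  List.mem_map_of_mem (List.getElem_mem _)

lemma velocitiesOf_injective {s : List (Segment n)} (h : (s.map Prod.snd).Nodup) :
    Function.Injective (velocitiesOf s) := fun i j hij =>
  Fin.ext <| (h.getElem_inj_iff (i := i) (j := j) (hi := by simp) (hj := by simp)).1 <| by
    simpa [velocitiesOf] using hij

end Partition

lemma integral_eq_smul_of_eqOn_Ioo {E : Type*} [NormedAddCommGroup E] [NormedSpace ℝ E]
    [CompleteSpace E] {f : ℝ → E} {a b : ℝ} {c : E} (hab : a ≤ b)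
    (h : EqOn f (fun _ => c) (Ioo a b)) :
    ∫ t in a..b, f t = (b - a) • c := by
  rw [intervalIntegral.integral_of_le hab, integral_Ioc_eq_integral_Ioo,
    setIntegral_congr_fun measurableSet_Ioo h, setIntegral_const, Real.volume_real_Ioo_of_le hab]

lemma intervalIntegrable_indicator {E : Type*} [NormedAddCommGroup E] {f : ℝ → E}
    (hf : Continuous f) {s : Set ℝ} (hs : MeasurableSet s) (a b : ℝ) :
    IntervalIntegrable (s.indicator f) volume a b :=
  (intervalIntegrable_iff.1 (hf.intervalIntegrable a b)).indicator hs |> intervalIntegrable_iff.2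

section StepFunction

variable {m : ℕ}

lemma Monotone.fin_succ {τ : Fin (m + 2) → ℝ} (hτ : Monotone τ) :
    Monotone fun i : Fin (m + 1) => τ i.succ :=
  hτ.comp Fin.strictMono_succ.monotone

lemma stepFn_succ (τ : Fin (m + 2) → ℝ) (w : Fin (m + 1) → E2 n) (t : ℝ) :
    stepFn (m + 1) τ w t = (Ioo (τ 0) (τ 1)).indicator (fun _ => w 0) t +
      stepFn m (fun i => τ i.succ) (fun i => w i.succ) t := by
  simp [stepFn, Fin.sum_univ_succ]

lemma stepFn_eq_zero_of_le {τ : Fin (m + 1) → ℝ} (hτ : Monotone τ) (w : Fin m → E2 n) {t : ℝ}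
    (ht : t ≤ τ 0) : stepFn m τ w t = 0 :=
  Finset.sum_eq_zero fun _ _ => indicator_of_notMem
    (fun hi => (ht.trans (hτ (Fin.zero_le _))).not_gt hi.1) _

lemma stepFn_succ_of_mem_Ioo {τ : Fin (m + 2) → ℝ} (hτ : Monotone τ) (w : Fin (m + 1) → E2 n)
    {t : ℝ} (ht : t ∈ Ioo (τ 0) (τ 1)) : stepFn (m + 1) τ w t = w 0 := by
  rw [stepFn_succ, indicator_of_mem ht, stepFn_eq_zero_of_le hτ.fin_succ _ ht.2.le, add_zero]

lemma stepFn_succ_of_le (τ : Fin (m + 2) → ℝ) (w : Fin (m + 1) → E2 n) {t : ℝ} (ht : τ 1 ≤ t) :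
    stepFn (m + 1) τ w t = stepFn m (fun i => τ i.succ) (fun i => w i.succ) t := by
  rw [stepFn_succ, indicator_of_notMem (fun h => ht.not_gt h.2), zero_add]

lemma intervalIntegrable_stepFn (τ : Fin (m + 1) → ℝ) (w : Fin m → E2 n) (a b : ℝ) :
    IntervalIntegrable (stepFn m τ w) volume a b := by
  have : stepFn m τ w = ∑ i, (Ioo (τ i.castSucc) (τ i.succ)).indicator (fun _ => w i) := by
    ext t; simp [stepFn]
  rw [this]
  exact .sum _ fun i _ => intervalIntegrable_indicator continuous_const measurableSet_Ioo a b

lemma intervalIntegrable_actionForm_stepFn (τ : Fin (m + 1) → ℝ) (w : Fin m → E2 n)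
    {y : ℝ → E2 n} (hy : Continuous y) (a b : ℝ) :
    IntervalIntegrable (fun t => actionForm (stepFn m τ w t) (y t)) volume a b := by
  have : (fun t => actionForm (stepFn m τ w t) (y t)) =
      ∑ i, (Ioo (τ i.castSucc) (τ i.succ)).indicator (fun t => actionForm (w i) (y t)) := by
    ext t
    simp only [stepFn, map_sum, LinearMap.sum_apply, Finset.sum_apply]
    refine Finset.sum_congr rfl fun i _ => ?_
    by_cases ht : t ∈ Ioo (τ i.castSucc) (τ i.succ) <;> simp [ht]
  rw [this]
  exact .sum _ fun i _ => intervalIntegrable_indicator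
    ((LinearMap.continuous_of_finiteDimensional (actionForm (w i))).comp hy) measurableSet_Ioo a b

lemma integral_stepFn_succ_of_le {τ : Fin (m + 2) → ℝ} (hτ : Monotone τ)
    (w : Fin (m + 1) → E2 n) {t : ℝ} (ht : τ 1 ≤ t) :
    ∫ s in τ 0..t, stepFn (m + 1) τ w s =
      (τ 1 - τ 0) • w 0 + ∫ s in τ 1..t, stepFn m (fun i => τ i.succ) (fun i => w i.succ) s := by
  rw [← intervalIntegral.integral_add_adjacent_intervals (intervalIntegrable_stepFn τ w _ _)
      (intervalIntegrable_stepFn τ w _ _),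
    integral_eq_smul_of_eqOn_Ioo (hτ (Fin.zero_le _)) fun s hs => stepFn_succ_of_mem_Ioo hτ w hs,
    intervalIntegral.integral_congr fun s hs => stepFn_succ_of_le τ w (uIcc_of_le ht ▸ hs).1]

theorem integral_stepFn {τ : Fin (m + 1) → ℝ} (hτ : Monotone τ) (w : Fin m → E2 n) :
    ∫ t in τ 0..τ (Fin.last m), stepFn m τ w t = displacement (segments m τ w) := by
  induction m with
  | zero => simp [segments]
  | succ m ih =>
    have ih' := ih hτ.fin_succ (fun i => w i.succ)
    simp only [Fin.succ_zero_eq_one, Fin.succ_last] at ih'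
    rw [integral_stepFn_succ_of_le hτ w (hτ (Fin.le_last 1)), ih', segments_succ,
      displacement_cons]

theorem integral_actionForm_stepFn {τ : Fin (m + 1) → ℝ} (hτ : Monotone τ) (w : Fin m → E2 n)
    (z₀ : E2 n) :
    ∫ t in τ 0..τ (Fin.last m),
        actionForm (stepFn m τ w t) (z₀ + ∫ s in τ 0..t, stepFn m τ w s) =
      actionForm (displacement (segments m τ w)) z₀ + segmentAction (segments m τ w) := by
  induction m generalizing z₀ with
  | zero => simp [segments]
  | succ m ih =>
    -- On the first interval the integrand is the constant `⟨-J w₀, z₀⟩` since `⟨-J w₀, w₀⟩ = 0`;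
    -- after it, the path is the step path of the remaining intervals started at `z₀ + ℓ₀ w₀`.
    set F := fun t =>
      actionForm (stepFn (m + 1) τ w t) (z₀ + ∫ s in τ 0..t, stepFn (m + 1) τ w s)
    have hF : ∀ a b, IntervalIntegrable F volume a b :=
      intervalIntegrable_actionForm_stepFn τ w <| continuous_const.add <|
        intervalIntegral.continuous_primitive (intervalIntegrable_stepFn τ w) _
    have hfirst : EqOn F (fun _ => actionForm (w 0) z₀) (Ioo (τ 0) (τ 1)) := by
      intro t ht
      have hprim : ∫ s in τ 0..t, stepFn (m + 1) τ w s = (t - τ 0) • w 0 :=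
        integral_eq_smul_of_eqOn_Ioo ht.1.le fun s hs =>
          stepFn_succ_of_mem_Ioo hτ w ⟨hs.1, hs.2.trans ht.2⟩
      simp only [F, stepFn_succ_of_mem_Ioo hτ w ht, hprim, map_add, map_smul, actionForm_self,
        smul_zero, add_zero]
    have hrest : EqOn F
        (fun t => actionForm (stepFn m (fun i => τ i.succ) (fun i => w i.succ) t)
          ((z₀ + (τ 1 - τ 0) • w 0) +
            ∫ s in τ 1..t, stepFn m (fun i => τ i.succ) (fun i => w i.succ) s))
        (uIcc (τ 1) (τ (Fin.last (m + 1)))) := by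
      intro t ht
      rw [uIcc_of_le (hτ (Fin.le_last 1))] at ht
      simp only [F, stepFn_succ_of_le τ w ht.1, integral_stepFn_succ_of_le hτ w ht.1, add_assoc]
    have ih' := ih hτ.fin_succ (fun i => w i.succ) (z₀ + (τ 1 - τ 0) • w 0)
    simp only [Fin.succ_zero_eq_one, Fin.succ_last] at ih'
    rw [← intervalIntegral.integral_add_adjacent_intervals (hF _ _) (hF _ _),
      integral_eq_smul_of_eqOn_Ioo (hτ (Fin.zero_le 1)) hfirst,
      intervalIntegral.integral_congr hrest, ih', segments_succ, displacement_cons,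
      segmentAction_cons]
    simp only [map_add, map_smul, LinearMap.add_apply, LinearMap.smul_apply, smul_eq_mul]
    ring

variable {τ : Fin (m + 1) → ℝ}

lemma IsPartition.integral_stepFn (hτ : IsPartition m τ) (w : Fin m → E2 n) :
    ∫ t in (0 : ℝ)..1, stepFn m τ w t = displacement (segments m τ w) :=
  hτ.2.1 ▸ hτ.2.2 ▸ _root_.integral_stepFn hτ.1 w

lemma IsPartition.integral_actionForm_stepFn (hτ : IsPartition m τ) (w : Fin m → E2 n)
    (z₀ : E2 n) :
    ∫ t in (0 : ℝ)..1, actionForm (stepFn m τ w t) (z₀ + ∫ s in (0 : ℝ)..t, stepFn m τ w s) =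
      actionForm (displacement (segments m τ w)) z₀ + segmentAction (segments m τ w) :=
  hτ.2.1 ▸ hτ.2.2 ▸ _root_.integral_actionForm_stepFn hτ.1 w z₀

end StepFunction

theorem piecewise_affine_merge_intervals_general
    (n k : ℕ) (v : Fin k → E2 n)
    (m : ℕ) (τ : Fin (m + 1) → ℝ) (hτ : IsPartition m τ) (w : Fin m → E2 n)
    (hw : ∀ i, w i ∈ Set.range v)
    (z : ℝ → E2 n)
    (hz : ∀ t ∈ Set.Icc (0:ℝ) 1, z t = z 0 + ∫ s in (0:ℝ)..t, stepFn m τ w s) :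
    ∃ (m' : ℕ) (τ' : Fin (m' + 1) → ℝ) (w' : Fin m' → E2 n),
      IsPartition m' τ' ∧
      (∀ i, w' i ∈ Set.range v) ∧
      z 0 + (∫ s in (0:ℝ)..1, stepFn m' τ' w' s) = z 1 ∧
      (∀ j : Fin k,
        {i : Fin m' | τ' i.castSucc < τ' i.succ ∧ w' i = v j}.Subsingleton) ∧
      ∫ t in (0:ℝ)..1,
          ip (-(Jmap (stepFn m' τ' w' t))) (z 0 + ∫ s in (0:ℝ)..t, stepFn m' τ' w' s)
        ≥ ∫ t in (0:ℝ)..1, ip (-(Jmap (stepFn m τ w t))) (z t) := by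
  obtain ⟨s, hs, hnodup⟩ := exists_improves_nodup (segments_nonneg (w := w) hτ.1)
  have hτ' : IsPartition s.length (partitionOf s) := isPartition_partitionOf hs.nonneg <| by
    rw [hs.duration_eq, duration_segments, hτ.2.1, hτ.2.2, sub_zero]
  have hz' : EqOn (fun t => actionForm (stepFn m τ w t) (z t))
      (fun t => actionForm (stepFn m τ w t) (z 0 + ∫ s in (0:ℝ)..t, stepFn m τ w s))
      (uIcc 0 1) :=
    fun t ht => by
      rw [uIcc_of_le zero_le_one] at ht
      simp only [hz t ht]
  refine ⟨s.length, partitionOf s, velocitiesOf s, hτ', fun i => ?_, ?_,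
    fun j i₁ hi₁ i₂ hi₂ => velocitiesOf_injective hnodup (hi₁.2.trans hi₂.2.symm), ?_⟩
  · obtain ⟨j, hj⟩ := List.mem_ofFn.1
      (map_snd_segments ▸ hs.sublist.subset (velocitiesOf_mem s i))
    exact hj ▸ hw j
  · rw [hτ'.integral_stepFn, segments_partitionOf, hs.displacement_eq, ← hτ.integral_stepFn,
      hz 1 ⟨zero_le_one, le_rfl⟩]
  · simp only [← actionForm_apply]
    rw [intervalIntegral.integral_congr hz', hτ.integral_actionForm_stepFn,
      hτ'.integral_actionForm_stepFn, segments_partitionOf, hs.displacement_eq]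
    exact (add_le_add_iff_left _).2 hs.segmentAction_le

/-- Lemma 3.4: given pairwise distinct vectors `v₁,…,v_k`, a piecewise
affine path `z` with velocities among `{v₁,…,v_k}` can be replaced by a piecewise affine
path `z'` with the same endpoints, velocities a.e. in `{v₁,…,v_k}`, such that for each `j`
the (a.e. defined) set `{t : ż'(t) = v_j}` is connected — i.e. at most one nonempty
interval of the new partition carries the value `v_j` — and with no smaller value of
`∫₀¹ ⟨-Jż', z'⟩ dt`. -/
theorem piecewise_affine_merge_intervals
    (n k : ℕ) (v : Fin k → E2 n) (hv : Function.Injective v)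
    (m : ℕ) (τ : Fin (m + 1) → ℝ) (hτ : IsPartition m τ) (w : Fin m → E2 n)
    (hw : ∀ i, w i ∈ Set.range v)
    (z : ℝ → E2 n)
    (hz : ∀ t ∈ Set.Icc (0:ℝ) 1, z t = z 0 + ∫ s in (0:ℝ)..t, stepFn m τ w s) :
    ∃ (m' : ℕ) (τ' : Fin (m' + 1) → ℝ) (w' : Fin m' → E2 n),
      IsPartition m' τ' ∧
      (∀ i, w' i ∈ Set.range v) ∧
      z 0 + (∫ s in (0:ℝ)..1, stepFn m' τ' w' s) = z 1 ∧
      (∀ j : Fin k,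
        {i : Fin m' | τ' i.castSucc < τ' i.succ ∧ w' i = v j}.Subsingleton) ∧
      ∫ t in (0:ℝ)..1,
          ip (-(Jmap (stepFn m' τ' w' t))) (z 0 + ∫ s in (0:ℝ)..t, stepFn m' τ' w' s)
        ≥ ∫ t in (0:ℝ)..1, ip (-(Jmap (stepFn m τ w t))) (z t) :=
  piecewise_affine_merge_intervals_general n k v m τ hτ w hw z hz
end
end
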